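/- If F(z) = ∫_a^b ρ(x)/(z−x) dx with ρ continuous and positive on [a,b], then for x' in the open interval (a,b), the limit of the imaginary part of F(x' + iε) as ε → 0⁺ equals −π·ρ(x'). -/

import Mathlib

/-!
The imaginary part of `1 / (x' + iε - x)` is `-ε / ((x' - x)² + ε²)`, which is `-π` times the
Cauchy density with location `x'` and scale `ε`. As `ε → 0⁺` these densities form an approximate
identity, so integrating them against `ρ` extended by zero outside `(a, b]` (an integrable function,
continuous at the interior point `x'`) gives `ρ x'` in the limit.
-/

open Real Filter Complex Set MeasureTheory ProbabilityTheory Topology Bornology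

lemma tendsto_norm_mul_cauchyPDFReal_cobounded :
    Tendsto (fun x : ℝ ↦ ‖x‖ * cauchyPDFReal 0 1 x) (cobounded ℝ) (𝓝 0) := by
  have hdecay : Tendsto (fun t : ℝ ↦ π⁻¹ * (t * (t ^ 2 + 1)⁻¹)) atTop (𝓝 0) := by
    rw [← mul_zero π⁻¹]
    refine (tendsto_of_tendsto_of_tendsto_of_le_of_le' tendsto_const_nhds
      tendsto_inv_atTop_zero ?_ ?_).const_mul π⁻¹
    · filter_upwards [eventually_ge_atTop 0] with t ht using by positivity
    · filter_upwards [eventually_gt_atTop 0] with t ht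
      rw [← div_eq_mul_inv, div_le_iff₀ (by positivity), inv_mul_eq_div, le_div_iff₀ ht]
      nlinarith
  refine (hdecay.comp tendsto_norm_cobounded_atTop).congr fun x ↦ ?_
  simp only [Function.comp_apply, Real.norm_eq_abs, sq_abs, cauchyPDFReal_def, NNReal.coe_one,
    mul_one, sub_zero, one_pow]
  ring

theorem tendsto_integral_halfPlanePoissonKernel_smul {E : Type*} [NormedAddCommGroup E]
    [NormedSpace ℝ E] [CompleteSpace E] {g : ℝ → E} {x₀ : ℝ} (hg : Integrable g)
    (hgx₀ : ContinuousAt g x₀) :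
    Tendsto (fun ε : ℝ ↦ ∫ x, (ε / ((x₀ - x) ^ 2 + ε ^ 2)) • g x) (𝓝[>] 0) (𝓝 (π • g x₀)) := by
  have hpeak := tendsto_integral_comp_smul_smul_of_integrable' (μ := volume)
    (cauchyPDF_pos 0 one_ne_zero · |>.le) (integral_cauchyPDFReal_eq_one 0 one_ne_zero)
    (by simpa using tendsto_norm_mul_cauchyPDFReal_cobounded) hg hgx₀
  -- the kernel at height `ε` is `π` times the standard Cauchy density rescaled by `c = ε⁻¹`
  refine ((hpeak.comp tendsto_inv_nhdsGT_zero).const_smul π).congr' ?_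
  filter_upwards [self_mem_nhdsWithin] with ε (hε : 0 < ε)
  rw [Function.comp_apply, ← integral_smul]
  congr 1 with x
  rw [smul_smul]
  congr 1
  simp only [Module.finrank_self, pow_one, smul_eq_mul, cauchyPDFReal_def, NNReal.coe_one, mul_one,
    sub_zero, one_pow]
  field_simp

lemma im_ofReal_div_add_mul_I_sub (c x₀ ε x : ℝ) :
    ((c : ℂ) / (x₀ + ε * I - x)).im = -(ε / ((x₀ - x) ^ 2 + ε ^ 2) * c) := by
  simp only [div_im, ofReal_im, sub_re, add_re, ofReal_re, mul_re, I_re, mul_zero, I_im, mul_one,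
    sub_self, add_zero, zero_mul, normSq_apply, sub_im, add_im, mul_im, zero_add, sub_zero,
    zero_div, zero_sub]
  ring

lemma im_intervalIntegral_ofReal_div_add_mul_I_sub {ρ : ℝ → ℝ} {a b : ℝ} (hab : a ≤ b)
    (hρ : ContinuousOn ρ (Icc a b)) (x₀ : ℝ) {ε : ℝ} (hε : ε ≠ 0) :
    (∫ x in a..b, (ρ x : ℂ) / (x₀ + ε * I - x)).im =
      -∫ x in a..b, ε / ((x₀ - x) ^ 2 + ε ^ 2) * ρ x := by
  have hden : ∀ x : ℝ, (x₀ : ℂ) + ε * I - x ≠ 0 := fun x h ↦ hε (by simpa using congrArg im h)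
  have hint : IntervalIntegrable (fun x : ℝ ↦ (ρ x : ℂ) / (x₀ + ε * I - x)) volume a b := by
    refine ContinuousOn.intervalIntegrable ?_
    rw [uIcc_of_le hab]
    exact (continuous_ofReal.comp_continuousOn hρ).div (by fun_prop) fun x _ ↦ hden x
  simp only [← intervalIntegral.integral_neg, ← im_ofReal_div_add_mul_I_sub]
  exact (intervalIntegral.intervalIntegral_im hint).symm

theorem stieltjes_perron_inversion_general (a b : ℝ)
    (ρ : ℝ → ℝ) (hρc : ContinuousOn ρ (Set.Icc a b))
    (x' : ℝ) (hx' : x' ∈ Set.Ioo a b) :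
    Tendsto (fun ε : ℝ =>
        (∫ x in a..b, (ρ x : ℂ) / ((x' : ℂ) + ε * Complex.I - (x : ℂ))).im)
      (nhdsWithin 0 (Set.Ioi 0)) (nhds (-π * ρ x')) := by
  have hab : a ≤ b := (hx'.1.trans hx'.2).le
  set g := (Ioc a b).indicator ρ
  have hg : Integrable g := (integrable_indicator_iff measurableSet_Ioc).2
    (hρc.integrableOn_Icc.mono_set Ioc_subset_Icc_self)
  have hgx' : ContinuousAt g x' := by
    refine (hρc.continuousAt (Icc_mem_nhds hx'.1 hx'.2)).congr ?_
    filter_upwards [Ioo_mem_nhds hx'.1 hx'.2] with x hx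
    exact (indicator_of_mem (Ioo_subset_Ioc_self hx) ρ).symm
  have hlim := (tendsto_integral_halfPlanePoissonKernel_smul hg hgx').neg
  rw [show g x' = ρ x' from indicator_of_mem (Ioo_subset_Ioc_self hx') ρ, smul_eq_mul,
    ← neg_mul] at hlim
  refine hlim.congr' ?_
  filter_upwards [self_mem_nhdsWithin] with ε (hε : 0 < ε)
  rw [im_intervalIntegral_ofReal_div_add_mul_I_sub hab hρc x' hε.ne',
    intervalIntegral.integral_of_le hab, ← integral_indicator measurableSet_Ioc]
  simp only [smul_eq_mul, g, indicator_mul_right]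

/-- Stieltjes–Perron inversion: if `F(z) = ∫_a^b ρ(x)/(z-x) dx` with `ρ` continuous and
positive on `[a,b]`, then for `x' ∈ (a,b)`,
`lim_{ε→0⁺} Im F(x' + iε) = -π ρ(x')`. -/
theorem stieltjes_perron_inversion (a b : ℝ) (hab : a < b)
    (ρ : ℝ → ℝ) (hρc : ContinuousOn ρ (Set.Icc a b))
    (hρpos : ∀ x ∈ Set.Icc a b, 0 < ρ x)
    (x' : ℝ) (hx' : x' ∈ Set.Ioo a b) :
    Tendsto (fun ε : ℝ =>
        (∫ x in a..b, (ρ x : ℂ) / ((x' : ℂ) + ε * Complex.I - (x : ℂ))).im)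
      (nhdsWithin 0 (Set.Ioi 0)) (nhds (-π * ρ x')) :=
  stieltjes_perron_inversion_general a b ρ hρc x' hx'
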